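/- Let χ : {1,...,n} → {ℓ,r}, ε : {1,...,n} → I, and 𝒥 the set of maximal ε-monochromatic χ-intervals. If π ∈ BNC(χ) satisfies π ≤ ε and π does not refine the partition 𝒥 (i.e., some block of π meets two distinct elements of 𝒥), then π ∨ 𝒥 (the join in BNC(χ)) contains an isolated maximal ε-monochromatic χ-interval which is an inner block of π ∨ 𝒥. -/

import Mathlib

noncomputable def chiKey {n : ℕ} (χ : Fin n → Bool) (i : Fin n) : Lex (ℕ × ℕ) :=
  toLex (if χ i then 0 else 1, if χ i then (i : ℕ) else n - (i : ℕ))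

noncomputable def sChi {n : ℕ} (χ : Fin n → Bool) : Equiv.Perm (Fin n) :=
  Tuple.sort (chiKey χ)

def ltChi {n : ℕ} (χ : Fin n → Bool) (i j : Fin n) : Prop :=
  (sChi χ).symm i < (sChi χ).symm j

def IsChiInterval {n : ℕ} (χ : Fin n → Bool) (I : Set (Fin n)) : Prop :=
  ∀ a b c : Fin n, a ∈ I → c ∈ I → ltChi χ a b → ltChi χ b c → b ∈ I

def IsMono {n : ℕ} {ι : Type*} (ε : Fin n → ι) (I : Set (Fin n)) : Prop :=
  ∀ a ∈ I, ∀ b ∈ I, ε a = ε b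

def IsMaxMono {n : ℕ} {ι : Type*} (χ : Fin n → Bool) (ε : Fin n → ι)
    (J : Set (Fin n)) : Prop :=
  J.Nonempty ∧ IsChiInterval χ J ∧ IsMono ε J ∧
    ∀ K : Set (Fin n), IsChiInterval χ K → IsMono ε K → J ⊆ K → J = K

def IsNonCrossing {n : ℕ} (r : Setoid (Fin n)) : Prop :=
  ∀ a b c d : Fin n, a < b → b < c → c < d → r.r a c → r.r b d → r.r a b

def IsBNC {n : ℕ} (χ : Fin n → Bool) (π : Setoid (Fin n)) : Prop :=
  IsNonCrossing (π.comap (sChi χ))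

/-!
Among the pairs `a ≺_χ b` that are `π`-related but lie in different maximal intervals, take one
of minimal `χ`-distance. As `ε a = ε b`, some `c` strictly between them has another colour, and
the maximal interval `J` of `c` lies strictly between `a` and `b`. A `π`-block leaving `J` would,
by noncrossing against `{a, b}`, produce a bad pair of smaller distance; so `J` is a union of
blocks of both `π` and `𝒥`, hence a block of `π ⊔ 𝒥`, and `a ∼ b` makes it inner.
-/

theorem Setoid.le_ker_mem {α : Type*} {r : Setoid α} {S : Set α}
    (h : ∀ x ∈ S, ∀ y, r.r x y → y ∈ S) : r ≤ Setoid.ker (· ∈ S) :=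
  fun x y hxy => propext ⟨fun hx => h x hx y hxy, fun hy => h y hy x (r.symm hxy)⟩

theorem Setoid.exists_minimal_pair_not_le {α : Type*} (p : α → ℕ)
    (hp : Function.Injective p) {r s : Setoid α} (h : ¬ r ≤ s) :
    ∃ a b, r.r a b ∧ ¬ s.r a b ∧ p a < p b ∧
      ∀ u v, r.r u v → ¬ s.r u v → p u < p v → p b - p a ≤ p v - p u := by
  obtain ⟨x, y, hxy, hnxy⟩ : ∃ x y, r.r x y ∧ ¬ s.r x y := by
    by_contra! h'
    exact h fun x y => h' x y
  have hne : p x ≠ p y := fun e => hnxy (hp e ▸ s.refl x)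
  let bad : Set (α × α) := {q | r.r q.1 q.2 ∧ ¬ s.r q.1 q.2 ∧ p q.1 < p q.2}
  have hbad : bad.Nonempty := by
    rcases hne.lt_or_gt with hlt | hlt
    · exact ⟨(x, y), hxy, hnxy, hlt⟩
    · exact ⟨(y, x), r.symm hxy, fun h => hnxy (s.symm h), hlt⟩
  obtain ⟨⟨a, b⟩, ⟨hab, hnab, hlt⟩, hmin⟩ :=
    (InvImage.wf (fun q : α × α => p q.2 - p q.1) wellFounded_lt).has_min bad hbad
  exact ⟨a, b, hab, hnab, hlt, fun u v huv hnuv hpuv => not_lt.1 (hmin (u, v) ⟨huv, hnuv, hpuv⟩)⟩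

section
variable {n : ℕ} {ι : Type*} {χ : Fin n → Bool} {ε : Fin n → ι}

variable (χ) in
noncomputable def chiPos (i : Fin n) : ℕ := (sChi χ).symm i

theorem ltChi_iff_chiPos_lt {a b : Fin n} : ltChi χ a b ↔ chiPos χ a < chiPos χ b :=
  Iff.rfl

theorem chiPos_injective : Function.Injective (chiPos χ) :=
  Fin.val_injective.comp (sChi χ).symm.injective

theorem ltChi_trichotomy (a b : Fin n) : ltChi χ a b ∨ a = b ∨ ltChi χ b a := by
  rcases lt_trichotomy (chiPos χ a) (chiPos χ b) with h | h | h
  · exact .inl h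
  · exact .inr (.inl (chiPos_injective h))
  · exact .inr (.inr h)

theorem IsChiInterval.union {I K : Set (Fin n)} (hI : IsChiInterval χ I)
    (hK : IsChiInterval χ K) {i : Fin n} (hiI : i ∈ I) (hiK : i ∈ K) :
    IsChiInterval χ (I ∪ K) := by
  intro x y z hx hz hxy hyz
  rcases ltChi_trichotomy y i with hyi | rfl | hiy
  · rcases hx with hx | hx
    · exact .inl (hI x y i hx hiI hxy hyi)
    · exact .inr (hK x y i hx hiK hxy hyi)
  · exact .inl hiI
  · rcases hz with hz | hz
    · exact .inl (hI i y z hiI hz hiy hyz)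
    · exact .inr (hK i y z hiK hz hiy hyz)

theorem IsChiInterval.ltChi_of_not_mem {J : Set (Fin n)} (hJ : IsChiInterval χ J)
    {a c i : Fin n} (hc : c ∈ J) (ha : a ∉ J) (hac : ltChi χ a c) (hi : i ∈ J) :
    ltChi χ a i := by
  rcases ltChi_trichotomy a i with hai | rfl | hia
  · exact hai
  · exact absurd hi ha
  · exact absurd (hJ i a c hi hc hia hac) ha

theorem IsChiInterval.ltChi_of_not_mem' {J : Set (Fin n)} (hJ : IsChiInterval χ J)
    {b c i : Fin n} (hc : c ∈ J) (hb : b ∉ J) (hcb : ltChi χ c b) (hi : i ∈ J) :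
    ltChi χ i b := by
  rcases ltChi_trichotomy i b with hib | rfl | hbi
  · exact hib
  · exact absurd hi hb
  · exact absurd (hJ c b i hc hi hcb hbi) hb

variable (χ) in
def chiIcc (a b : Fin n) : Set (Fin n) := {x | chiPos χ a ≤ chiPos χ x ∧ chiPos χ x ≤ chiPos χ b}

theorem isChiInterval_chiIcc (a b : Fin n) : IsChiInterval χ (chiIcc χ a b) :=
  fun _ _ _ hx hz hxy hyz => ⟨hx.1.trans hxy.le, hyz.le.trans hz.2⟩

theorem IsMono.union {I K : Set (Fin n)} (hI : IsMono ε I) (hK : IsMono ε K) {i : Fin n}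
    (hiI : i ∈ I) (hiK : i ∈ K) : IsMono ε (I ∪ K) := by
  have h : ∀ x ∈ I ∪ K, ε x = ε i := by
    rintro x (hx | hx)
    exacts [hI x hx i hiI, hK x hx i hiK]
  exact fun x hx y hy => (h x hx).trans (h y hy).symm

theorem IsMaxMono.subset_of_mem {J K : Set (Fin n)} (hJ : IsMaxMono χ ε J)
    (hK : IsChiInterval χ K) (hKε : IsMono ε K) {i : Fin n} (hiJ : i ∈ J) (hiK : i ∈ K) :
    K ⊆ J := by
  have hJK := hJ.2.2.2 _ (hJ.2.1.union hK hiJ hiK) (hJ.2.2.1.union hKε hiJ hiK)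
    Set.subset_union_left
  exact hJK ▸ Set.subset_union_right

theorem IsMaxMono.eq_of_mem {J K : Set (Fin n)} (hJ : IsMaxMono χ ε J)
    (hK : IsMaxMono χ ε K) {i : Fin n} (hiJ : i ∈ J) (hiK : i ∈ K) : J = K :=
  (hK.subset_of_mem hJ.2.1 hJ.2.2.1 hiK hiJ).antisymm (hJ.subset_of_mem hK.2.1 hK.2.2.1 hiJ hiK)

theorem IsMaxMono.exists_ne_between {J : Set (Fin n)} (hJ : IsMaxMono χ ε J) {a b : Fin n}
    (ha : a ∈ J) (hb : b ∉ J) (hab : ltChi χ a b) (hε : ε b = ε a) :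
    ∃ c, ltChi χ a c ∧ ltChi χ c b ∧ ε c ≠ ε a := by
  by_contra! h
  have hεK : ∀ x ∈ chiIcc χ a b, ε x = ε a := by
    rintro x ⟨hax, hxb⟩
    rcases hax.eq_or_lt with hax | hax
    · rw [chiPos_injective hax]
    rcases hxb.eq_or_lt with hxb | hxb
    · rwa [chiPos_injective hxb]
    exact h x hax hxb
  have hKJ := hJ.subset_of_mem (isChiInterval_chiIcc a b)
    (fun x hx y hy => (hεK x hx).trans (hεK y hy).symm) ha ⟨le_rfl, hab.le⟩
  exact hb (hKJ ⟨hab.le, le_rfl⟩)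

theorem IsBNC.rel_of_crossing {π : Setoid (Fin n)} (hπ : IsBNC χ π) {u v w z : Fin n}
    (huv : ltChi χ u v) (hvw : ltChi χ v w) (hwz : ltChi χ w z) (huw : π.r u w)
    (hvz : π.r v z) : π.r u v := by
  have key : ∀ x y, (π.comap (sChi χ)).r ((sChi χ).symm x) ((sChi χ).symm y) ↔ π.r x y := by
    intro x y
    show π.r (sChi χ ((sChi χ).symm x)) (sChi χ ((sChi χ).symm y)) ↔ _
    simp only [Equiv.apply_symm_apply]
  exact (key u v).1 (hπ _ _ _ _ huv hvw hwz ((key u w).2 huw) ((key v z).2 hvz))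

theorem IsBNC.rel_of_between_minimal_pair {π 𝒥 : Setoid (Fin n)} (hπ : IsBNC χ π)
    {a b x y : Fin n} (hab : π.r a b)
    (hmin : ∀ u v, π.r u v → ¬ 𝒥.r u v → chiPos χ u < chiPos χ v →
      chiPos χ b - chiPos χ a ≤ chiPos χ v - chiPos χ u)
    (hax : ltChi χ a x) (hxb : ltChi χ x b) (hnax : ¬ 𝒥.r a x) (hnxb : ¬ 𝒥.r x b)
    (hxy : π.r x y) : 𝒥.r x y := by
  have closer : ∀ u v, π.r u v → ltChi χ u v →
      chiPos χ v - chiPos χ u < chiPos χ b - chiPos χ a → 𝒥.r u v :=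
    fun u v huv hlt hd => by_contra fun h => (hmin u v huv h hlt).not_gt hd
  rw [ltChi_iff_chiPos_lt] at hax hxb
  rcases ltChi_trichotomy y a with hya | rfl | hay
  · have hπya : π.r y a := hπ.rel_of_crossing hya hax hxb (π.symm hxy) hab
    exact absurd (closer a x (π.trans (π.symm hπya) (π.symm hxy)) hax (by omega)) hnax
  · exact absurd (closer y x (π.symm hxy) hax (by omega)) hnax
  rcases ltChi_trichotomy y b with hyb | rfl | hby
  · rw [ltChi_iff_chiPos_lt (χ := χ)] at hay hyb
    rcases ltChi_trichotomy x y with hxy' | rfl | hyx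
    · exact closer x y hxy hxy' (by omega)
    · exact 𝒥.refl x
    · rw [ltChi_iff_chiPos_lt] at hyx
      exact 𝒥.symm (closer y x (π.symm hxy) hyx (by omega))
  · exact absurd (closer x y hxy hxb (by omega)) hnxb
  · exact absurd (closer a x (hπ.rel_of_crossing hax hxb hby hab hxy) hax (by omega)) hnax

theorem IsMaxMono.rel_iff_mem {𝒥 : Setoid (Fin n)}
    (h𝒥 : ∀ a b, 𝒥.r a b ↔ ∃ J, IsMaxMono χ ε J ∧ a ∈ J ∧ b ∈ J) {J : Set (Fin n)}
    (hJ : IsMaxMono χ ε J) {x y : Fin n} (hx : x ∈ J) : 𝒥.r x y ↔ y ∈ J := by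
  refine ⟨fun hxy => ?_, fun hy => (h𝒥 x y).2 ⟨J, hJ, hx, hy⟩⟩
  obtain ⟨K, hK, hxK, hyK⟩ := (h𝒥 x y).1 hxy
  exact hK.eq_of_mem hJ hxK hx ▸ hyK

end

/-- If `π ∈ BNC(χ)` satisfies `π ≤ ε` but `π` does not refine the partition `𝒥` of
maximal `ε`-monochromatic `χ`-intervals, then the join `π ⊔ 𝒥` contains an isolated
maximal `ε`-monochromatic `χ`-interval which is moreover an inner block of `π ⊔ 𝒥`:
there are `j ∼_{π⊔𝒥} k` with `j ≺_χ i ≺_χ k` for every `i ∈ J`. -/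
theorem exists_isolated_inner_interval {n : ℕ} {ι : Type*}
    (χ : Fin n → Bool) (ε : Fin n → ι) (π 𝒥 : Setoid (Fin n))
    (h𝒥 : ∀ a b : Fin n, 𝒥.r a b ↔ ∃ J : Set (Fin n), IsMaxMono χ ε J ∧ a ∈ J ∧ b ∈ J)
    (hπ : IsBNC χ π)
    (hmono : ∀ a b : Fin n, π.r a b → ε a = ε b)
    (hnref : ¬ π ≤ 𝒥) :
    ∃ J : Set (Fin n), IsMaxMono χ ε J ∧
      (∀ a b : Fin n, (π ⊔ 𝒥).r a b → (a ∈ J ↔ b ∈ J)) ∧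
      (∃ j k : Fin n, (π ⊔ 𝒥).r j k ∧ ∀ i ∈ J, ltChi χ j i ∧ ltChi χ i k) := by
  obtain ⟨a, b, hab, hnab, hlt, hmin⟩ :=
    Setoid.exists_minimal_pair_not_le (chiPos χ) chiPos_injective hnref
  obtain ⟨Ja, hJa, haJa, -⟩ := (h𝒥 a a).1 (𝒥.refl a)
  obtain ⟨c, hac, hcb, hεc⟩ :=
    hJa.exists_ne_between haJa (mt (hJa.rel_iff_mem h𝒥 haJa).2 hnab) hlt (hmono a b hab).symm
  obtain ⟨J, hJ, hcJ, -⟩ := (h𝒥 c c).1 (𝒥.refl c)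
  have haJ : a ∉ J := fun ha => hεc (hJ.2.2.1 c hcJ a ha)
  have hbJ : b ∉ J := fun hb => hεc ((hJ.2.2.1 c hcJ b hb).trans (hmono a b hab).symm)
  have hbetween : ∀ i ∈ J, ltChi χ a i ∧ ltChi χ i b := fun i hi =>
    ⟨hJ.2.1.ltChi_of_not_mem hcJ haJ hac hi, hJ.2.1.ltChi_of_not_mem' hcJ hbJ hcb hi⟩
  have hπJ : π ≤ Setoid.ker (· ∈ J) := Setoid.le_ker_mem fun x hx y hxy => by
    have hrelJ : ∀ z, 𝒥.r x z ↔ z ∈ J := fun z => hJ.rel_iff_mem h𝒥 hx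
    exact (hrelJ y).1 (hπ.rel_of_between_minimal_pair hab hmin (hbetween x hx).1
      (hbetween x hx).2 (fun h => haJ ((hrelJ a).1 (𝒥.symm h))) (mt (hrelJ b).1 hbJ) hxy)
  have h𝒥J : 𝒥 ≤ Setoid.ker (· ∈ J) :=
    Setoid.le_ker_mem fun x hx y => (hJ.rel_iff_mem h𝒥 hx).1
  exact ⟨J, hJ, fun x y hxy => (sup_le hπJ h𝒥J hxy).to_iff,
    a, b, (le_sup_left : π ≤ π ⊔ 𝒥) hab, hbetween⟩
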